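/- For all natural numbers n ≥ 3, the third-order Jacobsthal-Lucas matrix M_{j,n} equals the 3×3 matrix with rows [j³ₙ₊₁, j³ₙ+2j³ₙ₋₁, 2j³ₙ], [j³ₙ, j³ₙ₋₁+2j³ₙ₋₂, 2j³ₙ₋₁], [j³ₙ₋₁, j³ₙ₋₂+2j³ₙ₋₃, 2j³ₙ₋₂]. -/
import Mathlib


def jL3 : ℕ → ℤ
  | 0 => 2
  | 1 => 1
  | 2 => 5
  | n + 3 => jL3 (n + 2) + jL3 (n + 1) + 2 * jL3 n

def Mj : ℕ → Matrix (Fin 3) (Fin 3) ℤ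
  | 0 => !![1, 4, 4; 2, -1, 2; 1, 1, -2]
  | 1 => !![5, 5, 2; 1, 4, 4; 2, -1, 2]
  | 2 => !![10, 7, 10; 5, 5, 2; 1, 4, 4]
  | n + 3 => Mj (n + 2) + Mj (n + 1) + (2 : ℤ) • Mj n

lemma aux : ∀ m : ℕ, Mj (m + 3) =
    !![jL3 (m + 4), jL3 (m + 3) + 2 * jL3 (m + 2), 2 * jL3 (m + 3);
       jL3 (m + 3), jL3 (m + 2) + 2 * jL3 (m + 1), 2 * jL3 (m + 2);
       jL3 (m + 2), jL3 (m + 1) + 2 * jL3 m, 2 * jL3 (m + 1)] := by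
  intro m
  induction m using Nat.strong_induction_on with
  | _ m ih =>
    match m with
    | 0 => decide
    | 1 => decide
    | 2 => decide
    | (k + 3) =>
      show Mj (k + 3 + 2) + Mj (k + 3 + 1) + (2 : ℤ) • Mj (k + 3) = _
      rw [show k + 3 + 2 = k + 2 + 3 by ring, show k + 3 + 1 = k + 1 + 3 by ring,
        ih (k+2) (by omega), ih (k+1) (by omega), ih k (by omega)]
      ext i j
      fin_cases i <;> fin_cases j <;>
        simp [Matrix.smul_apply, show k+3+4 = k+4+3 by ring, show k+3+3 = k+3+3 by ring,
          show k+3+2 = k+2+3 by ring, show k+3+1 = k+1+3 by ring, jL3] <;> ring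

theorem stmt12 (n : ℕ) (hn : 3 ≤ n) :
    Mj n = !![jL3 (n + 1), jL3 n + 2 * jL3 (n - 1), 2 * jL3 n;
              jL3 n, jL3 (n - 1) + 2 * jL3 (n - 2), 2 * jL3 (n - 1);
              jL3 (n - 1), jL3 (n - 2) + 2 * jL3 (n - 3), 2 * jL3 (n - 2)] := by
  obtain ⟨m, rfl⟩ : ∃ m, n = m + 3 := ⟨n - 3, by omega⟩
  simpa using aux m
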